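/- arXiv:2007.06197 — 5 statements merged into one kernel-verified Lean document; each statement's English description precedes it below -/
import Mathlib

section
/- For all integers a, b > 1, the product ζ(a)ζ(b) equals Σ_{i+j=a+b, i≥2, j≥1} (C(i-1, a-1) + C(i-1, b-1)) ζ(i,j), the shuffle relation for depth-two multiple zeta values. -/
/-- Riemann zeta value `ζ(k) = Σ_{n>0} n^{-k}`. -/
noncomputable def zetaVal (k : ℕ) : ℝ := ∑' n : ℕ+, ((n : ℝ) ^ k)⁻¹

/-- Double zeta value `ζ(k₁,k₂) = Σ_{n₁>n₂>0} n₁^{-k₁} n₂^{-k₂}`. -/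
noncomputable def doubleZetaVal (k₁ k₂ : ℕ) : ℝ :=
  ∑' p : {p : ℕ+ × ℕ+ // p.2 < p.1}, (((p.1.1 : ℝ) ^ k₁)⁻¹ * ((p.1.2 : ℝ) ^ k₂)⁻¹)

open Finset


lemma pf0 (b : ℕ) (x y : ℝ) (hx : 0 < x) (hy : 0 < y) :
    x⁻¹ * (y ^ (b+1))⁻¹ =
      (∑ k ∈ range (b+1), ((x+y) ^ (k+1))⁻¹ * (y ^ (b+1-k))⁻¹)
        + ((x+y) ^ (b+1))⁻¹ * x⁻¹ := by
  induction b with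
  | zero =>
    have hs : x + y ≠ 0 := by positivity
    norm_num
    field_simp
  | succ b ih =>
    have hs : x + y ≠ 0 := by positivity
    have hx' : x ≠ 0 := hx.ne'
    have hy' : y ≠ 0 := hy.ne'
    have key : x⁻¹ * (y ^ (b+2))⁻¹ = (x+y)⁻¹ * ((y ^ (b+2))⁻¹ + x⁻¹ * (y ^ (b+1))⁻¹) := by
      field_simp
      ring
    rw [key, ih, Finset.sum_range_succ' (fun k => ((x+y) ^ (k+1))⁻¹ * (y ^ (b+2-k))⁻¹)]
    simp only [Nat.succ_sub_succ, Nat.sub_zero, pow_one]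
    have : ∀ k ∈ range (b+1), ((x+y) ^ (k+1+1))⁻¹ * (y ^ (b+1-k))⁻¹
        = (x+y)⁻¹ * (((x+y) ^ (k+1))⁻¹ * (y ^ (b+1-k))⁻¹) := by
      intro k _
      rw [pow_succ, mul_inv]
      ring
    rw [Finset.sum_congr rfl this, ← Finset.mul_sum, pow_succ (x+y) (b+1), mul_inv]
    ring

lemma pfA0 (b : ℕ) (x y : ℝ) (hx : 0 < x) (hy : 0 < y) :
    (x ^ (0+1))⁻¹ * (y ^ (b+1))⁻¹ =
      ∑ k ∈ range (0+b+1),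
        ((k.choose 0 : ℝ) * (((x+y) ^ (k+1))⁻¹ * (y ^ (0+b+1-k))⁻¹)
        + (k.choose b : ℝ) * (((x+y) ^ (k+1))⁻¹ * (x ^ (0+b+1-k))⁻¹)) := by
  simp only [zero_add, pow_one, Nat.choose_zero_right, Nat.cast_one, one_mul]
  rw [pf0 b x y hx hy, Finset.sum_add_distrib]
  congr 1
  symm
  rw [Finset.sum_eq_single b
    (fun k hk' hk => ?_) (fun h => absurd (Finset.self_mem_range_succ b) h)]
  · rw [Nat.choose_self, Nat.add_sub_cancel_left]
    norm_num
  · have hkb : k < b := by simpa using lt_of_le_of_ne (Nat.lt_succ_iff.mp (Finset.mem_range.mp hk')) hk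
    rw [Nat.choose_eq_zero_of_lt hkb]
    norm_num

lemma pfAux : ∀ n a b : ℕ, a + b = n → ∀ x y : ℝ, 0 < x → 0 < y →
    (x ^ (a+1))⁻¹ * (y ^ (b+1))⁻¹ =
      ∑ k ∈ range (a+b+1),
        ((k.choose a : ℝ) * (((x+y) ^ (k+1))⁻¹ * (y ^ (a+b+1-k))⁻¹)
        + (k.choose b : ℝ) * (((x+y) ^ (k+1))⁻¹ * (x ^ (a+b+1-k))⁻¹)) := by
  intro n
  induction n with
  | zero =>
    intro a b h x y hx hy
    obtain ⟨rfl, rfl⟩ : a = 0 ∧ b = 0 := by omega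
    exact pfA0 0 x y hx hy
  | succ n ihn =>
    intro a b h x y hx hy
    match a, b with
    | 0, b => exact pfA0 b x y hx hy
    | a+1, 0 =>
      have := pfA0 (a+1) y x hy hx
      rw [mul_comm] at this
      rw [this]
      refine Finset.sum_congr (by congr 1; omega) fun k hk => ?_
      have e1 : 0 + (a+1) + 1 - k = a + 1 + 0 + 1 - k := by omega
      rw [e1, add_comm y x, add_comm]
    | a+1, b+1 =>
      have hs : x + y ≠ 0 := by positivity
      have hx' : x ≠ 0 := hx.ne'
      have hy' : y ≠ 0 := hy.ne'
      have key : (x ^ (a+1+1))⁻¹ * (y ^ (b+1+1))⁻¹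
          = (x+y)⁻¹ * ((x ^ (a+1))⁻¹ * (y ^ (b+1+1))⁻¹ + (x ^ (a+1+1))⁻¹ * (y ^ (b+1))⁻¹) := by
        field_simp
        ring
      have IH1 := ihn a (b+1) (by omega) x y hx hy
      have IH2 := ihn (a+1) b (by omega) x y hx hy
      have e1 : a + (b+1) + 1 = a + b + 2 := by omega
      have e2 : a + 1 + b + 1 = a + b + 2 := by omega
      rw [e1] at IH1
      rw [e2] at IH2
      have e3 : a + 1 + (b+1) + 1 = (a + b + 2) + 1 := by omega
      rw [e3, Finset.sum_range_succ'
        (fun k => ((k.choose (a+1) : ℝ) * (((x+y) ^ (k+1))⁻¹ * (y ^ (a+b+2+1-k))⁻¹)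
          + (k.choose (b+1) : ℝ) * (((x+y) ^ (k+1))⁻¹ * (x ^ (a+b+2+1-k))⁻¹)))]
      simp only [Nat.choose_zero_succ, Nat.cast_zero, zero_mul, add_zero, zero_add]
      rw [key, IH1, IH2, ← Finset.sum_add_distrib, Finset.mul_sum]
      refine Finset.sum_congr rfl fun k hk => ?_
      have e4 : a + b + 2 + 1 - (k + 1) = a + b + 2 - k := by omega
      rw [e4, pow_succ (x+y) (k+1), mul_inv]
      push_cast [Nat.choose_succ_succ]
      ring

lemma zsummable {k : ℕ} (hk : 2 ≤ k) : Summable (fun n : ℕ+ => ((n : ℝ) ^ k)⁻¹) :=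
  (Real.summable_nat_pow_inv.mpr hk).comp_injective PNat.coe_injective

/-- `(m,n) ↦ (m+n, n)` -/
def eY : ℕ+ × ℕ+ ≃ {p : ℕ+ × ℕ+ // p.2 < p.1} where
  toFun q := ⟨(q.1 + q.2, q.2), PNat.lt_add_left q.2 q.1⟩
  invFun p := (p.1.1 - p.1.2, p.1.2)
  left_inv q := by simp [PNat.add_sub]
  right_inv p := by
    ext <;> simp [PNat.sub_add_of_lt p.2]

/-- `(m,n) ↦ (m+n, m)` -/
def eX : ℕ+ × ℕ+ ≃ {p : ℕ+ × ℕ+ // p.2 < p.1} where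
  toFun q := ⟨(q.1 + q.2, q.1), PNat.lt_add_right q.1 q.2⟩
  invFun p := (p.1.2, p.1.1 - p.1.2)
  left_inv q := by
    have : q.1 + q.2 - q.1 = q.2 := by rw [add_comm, PNat.add_sub]
    simp [this]
  right_inv p := by
    ext <;> simp [PNat.add_sub_of_lt p.2]

lemma tsumY (i j : ℕ) :
    ∑' z : ℕ+ × ℕ+, (((z.1 + z.2 : ℕ+) : ℝ) ^ i)⁻¹ * ((z.2 : ℝ) ^ j)⁻¹
      = doubleZetaVal i j := by
  rw [doubleZetaVal, ← Equiv.tsum_eq eY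
    (fun p : {p : ℕ+ × ℕ+ // p.2 < p.1} => ((p.1.1 : ℝ) ^ i)⁻¹ * ((p.1.2 : ℝ) ^ j)⁻¹)]
  rfl

lemma tsumX (i j : ℕ) :
    ∑' z : ℕ+ × ℕ+, (((z.1 + z.2 : ℕ+) : ℝ) ^ i)⁻¹ * ((z.1 : ℝ) ^ j)⁻¹
      = doubleZetaVal i j := by
  rw [doubleZetaVal, ← Equiv.tsum_eq eX
    (fun p : {p : ℕ+ × ℕ+ // p.2 < p.1} => ((p.1.1 : ℝ) ^ i)⁻¹ * ((p.1.2 : ℝ) ^ j)⁻¹)]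
  rfl

noncomputable def Afun (p q k : ℕ) (z : ℕ+ × ℕ+) : ℝ :=
  (k.choose p : ℝ) * ((((z.1 + z.2 : ℕ+) : ℝ)) ^ (k+1))⁻¹ * ((z.2 : ℝ) ^ (p+q+1-k))⁻¹
noncomputable def Bfun (p q k : ℕ) (z : ℕ+ × ℕ+) : ℝ :=
  (k.choose q : ℝ) * ((((z.1 + z.2 : ℕ+) : ℝ)) ^ (k+1))⁻¹ * ((z.1 : ℝ) ^ (p+q+1-k))⁻¹
noncomputable def Ffun (p q : ℕ) (z : ℕ+ × ℕ+) : ℝ :=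
  (((z.1 : ℝ)) ^ (p+1))⁻¹ * (((z.2 : ℝ)) ^ (q+1))⁻¹

set_option maxHeartbeats 2000000 in
/-- Shuffle relation in depth two: for a, b > 1,
`ζ(a)ζ(b) = Σ_{i+j=a+b, i≥2, j≥1} (C(i-1,a-1) + C(i-1,b-1)) ζ(i,j)`. -/
theorem stmt1 (a b : ℕ) (ha : 1 < a) (hb : 1 < b) :
    zetaVal a * zetaVal b =
      ∑ i ∈ Finset.Icc 2 (a + b - 1),
        (((i - 1).choose (a - 1) + (i - 1).choose (b - 1) : ℕ) : ℝ) *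
          doubleZetaVal i (a + b - i) := by
  obtain ⟨p, rfl⟩ : ∃ p, a = p + 1 := ⟨a - 1, by omega⟩
  obtain ⟨q, rfl⟩ : ∃ q, b = q + 1 := ⟨b - 1, by omega⟩
  have hp : 1 ≤ p := by omega
  have hq : 1 ≤ q := by omega
  let A : ℕ → ℕ+ × ℕ+ → ℝ := Afun p q
  let B : ℕ → ℕ+ × ℕ+ → ℝ := Bfun p q
  let F : ℕ+ × ℕ+ → ℝ := Ffun p q
  have hFz : ∀ z : ℕ+ × ℕ+, F z = ∑ k ∈ range (p+q+1), (A k z + B k z) := by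
    intro z
    have hx : (0:ℝ) < (z.1 : ℝ) := by exact_mod_cast z.1.pos
    have hy : (0:ℝ) < (z.2 : ℝ) := by exact_mod_cast z.2.pos
    have hcast : ((z.1 : ℝ) + (z.2 : ℝ)) = ((z.1 + z.2 : ℕ+) : ℝ) := by push_cast; ring
    have := pfAux (p+q) p q rfl (z.1 : ℝ) (z.2 : ℝ) hx hy
    show Ffun p q z = _
    rw [Ffun, this]
    refine Finset.sum_congr rfl fun k _ => ?_
    show _ = Afun p q k z + Bfun p q k z
    rw [hcast, Afun, Bfun]
    ring
  have hSA : Summable (fun n : ℕ+ => ((n : ℝ) ^ (p+1))⁻¹) := zsummable (by omega)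
  have hSB : Summable (fun n : ℕ+ => ((n : ℝ) ^ (q+1))⁻¹) := zsummable (by omega)
  have hF : Summable F :=
    hSA.mul_of_nonneg hSB (fun n => by positivity) (fun n => by positivity)
  have hAnn : ∀ k z, 0 ≤ A k z := fun k z => by rw [show A k z = Afun p q k z from rfl, Afun]; positivity
  have hBnn : ∀ k z, 0 ≤ B k z := fun k z => by rw [show B k z = Bfun p q k z from rfl, Bfun]; positivity
  have hSumA : ∀ k ∈ range (p+q+1), Summable (A k) := by
    intro k hk
    refine hF.of_nonneg_of_le (fun z => hAnn k z) (fun z => ?_)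
    calc A k z ≤ A k z + B k z := le_add_of_nonneg_right (hBnn k z)
      _ ≤ ∑ k' ∈ range (p+q+1), (A k' z + B k' z) :=
          Finset.single_le_sum (fun i _ => add_nonneg (hAnn i z) (hBnn i z)) hk
      _ = F z := (hFz z).symm
  have hSumB : ∀ k ∈ range (p+q+1), Summable (B k) := by
    intro k hk
    refine hF.of_nonneg_of_le (fun z => hBnn k z) (fun z => ?_)
    calc B k z ≤ A k z + B k z := le_add_of_nonneg_left (hAnn k z)
      _ ≤ ∑ k' ∈ range (p+q+1), (A k' z + B k' z) :=
          Finset.single_le_sum (fun i _ => add_nonneg (hAnn i z) (hBnn i z)) hk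
      _ = F z := (hFz z).symm
  have step1 : zetaVal (p+1) * zetaVal (q+1) = ∑' z : ℕ+ × ℕ+, F z := by
    rw [zetaVal, zetaVal]
    exact Summable.tsum_mul_tsum hSA hSB hF
  have step2 : ∑' z : ℕ+ × ℕ+, F z
      = ∑ k ∈ range (p+q+1),
          ((k.choose p : ℝ) * doubleZetaVal (k+1) (p+q+1-k)
            + (k.choose q : ℝ) * doubleZetaVal (k+1) (p+q+1-k)) := by
    rw [tsum_congr hFz, Summable.tsum_finsetSum (fun k hk => (hSumA k hk).add (hSumB k hk))]
    refine Finset.sum_congr rfl fun k hk => ?_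
    rw [Summable.tsum_add (hSumA k hk) (hSumB k hk)]
    congr 1
    · show ∑' z, Afun p q k z = _
      simp only [Afun]
      simp only [mul_assoc]
      rw [tsum_mul_left, tsumY]
    · show ∑' z, Bfun p q k z = _
      simp only [Bfun]
      simp only [mul_assoc]
      rw [tsum_mul_left, tsumX]
  rw [step1, step2]
  -- reindex the sums
  have e0 : p + 1 + (q + 1) - 1 = p + q + 1 := by omega
  rw [e0]
  have e1 : Finset.Icc 2 (p+q+1) = Finset.Ico 2 (p+q+2) := by rw [← Finset.Ico_add_one_right_eq_Icc]; rfl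
  rw [e1, Finset.sum_Ico_eq_sum_range]
  have e2 : p + q + 2 - 2 = p + q := by omega
  rw [e2]
  rw [Finset.sum_range_succ'
    (fun k => ((k.choose p : ℝ) * doubleZetaVal (k+1) (p+q+1-k)
      + (k.choose q : ℝ) * doubleZetaVal (k+1) (p+q+1-k)))]
  have h0 : (Nat.choose 0 p : ℝ) = 0 := by
    rw [Nat.choose_eq_zero_of_lt hp]; norm_num
  have h0q : (Nat.choose 0 q : ℝ) = 0 := by
    rw [Nat.choose_eq_zero_of_lt hq]; norm_num
  rw [h0, h0q]
  simp only [zero_mul, add_zero]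
  refine Finset.sum_congr rfl fun k _ => ?_
  have e3 : 2 + k - 1 = k + 1 := by omega
  have e4 : p + 1 + (q + 1) - (2 + k) = p + q - k := by omega
  have e5 : p + 1 - 1 = p := by omega
  have e6 : q + 1 - 1 = q := by omega
  have e7 : p + q + 1 - (k + 1) = p + q - k := by omega
  have e8 : 2 + k = k + 1 + 1 := by omega
  rw [e3, e4, e5, e6, e7, e8]
  push_cast
  ring
end

section
/- The subalgebra W^DR = k·1 ⊕ V^DR·e₁ of the free associative algebra V^DR = k⟨e₀,e₁⟩ is itself a free associative algebra, freely generated by the elements y_n := -e₀^{n-1} e₁ for n ≥ 1. -/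
open FreeAlgebra

variable (k : Type) [CommRing k]

/-- `V^DR`, the free associative algebra on `e₀, e₁`. -/
abbrev VDR := FreeAlgebra k (Fin 2)

/-- `W^DR = k·1 ⊕ V^DR·e₁`, as a `k`-submodule of `V^DR`. -/
noncomputable def WDR : Submodule k (VDR k) :=
  Submodule.span k {1} ⊔ LinearMap.range (LinearMap.mulRight k (ι k (1 : Fin 2)))

/-- The algebra morphism from the free algebra on generators `y_n`, `n ≥ 1`,
sending the `n`-th generator to `y_n := -e₀^{n-1} e₁`. -/
noncomputable def yMap : FreeAlgebra k {n : ℕ // 0 < n} →ₐ[k] VDR k :=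
  FreeAlgebra.lift k fun n => -((ι k (0 : Fin 2)) ^ (n.1 - 1) * ι k (1 : Fin 2))

/-! ### Auxiliary material -/

section Aux

abbrev Ygen := {n : ℕ // 0 < n}

/-- the block `0^(n-1) 1` as a list -/
def blkL (n : Ygen) : List (Fin 2) := List.replicate (n.1 - 1) 0 ++ [1]

def ψword (l : List Ygen) : List (Fin 2) := (l.map blkL).flatten

lemma ψword_nil : ψword [] = [] := rfl

lemma ψword_cons (n : Ygen) (l : List Ygen) :
    ψword (n :: l) = List.replicate (n.1 - 1) 0 ++ 1 :: ψword l := by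
  simp [ψword, blkL]

lemma rep_cancel : ∀ (a b : ℕ) (s t : List (Fin 2)),
    List.replicate a 0 ++ 1 :: s = List.replicate b 0 ++ 1 :: t → a = b ∧ s = t := by
  intro a
  induction a with
  | zero =>
    intro b s t h
    cases b with
    | zero => simpa using h
    | succ b => simp [List.replicate_succ] at h
  | succ a ih =>
    intro b s t h
    cases b with
    | zero => simp [List.replicate_succ] at h
    | succ b =>
      simp only [List.replicate_succ, List.cons_append, List.cons.injEq] at h
      obtain ⟨hab, hst⟩ := ih b s t h.2
      exact ⟨by omega, hst⟩

lemma ψword_inj : Function.Injective ψword := by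
  intro l1
  induction l1 with
  | nil =>
    intro l2 h
    cases l2 with
    | nil => rfl
    | cons m l2 => rw [ψword_nil, ψword_cons] at h; simp at h
  | cons n l1 ih =>
    intro l2 h
    cases l2 with
    | nil => rw [ψword_nil, ψword_cons] at h; simp at h
    | cons m l2 =>
      rw [ψword_cons, ψword_cons] at h
      obtain ⟨hab, hst⟩ := rep_cancel _ _ _ _ h
      have hnm : n = m := Subtype.ext (by have := n.2; have := m.2; omega)
      rw [hnm, ih hst]

lemma ψword_surj : ∀ ys : List (Fin 2),
    ∃ (n : Ygen) (l : List Ygen), ψword (n :: l) = ys ++ [1] := by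
  intro ys
  induction ys with
  | nil => exact ⟨⟨1, one_pos⟩, [], by rw [ψword_cons, ψword_nil]; rfl⟩
  | cons c ys ih =>
    obtain ⟨n, l, h⟩ := ih
    fin_cases c
    · refine ⟨⟨n.1 + 1, by omega⟩, l, ?_⟩
      rw [ψword_cons] at h ⊢
      have h2 : (⟨n.1 + 1, by omega⟩ : Ygen).1 - 1 = (n.1 - 1) + 1 := by
        show n.1 + 1 - 1 = (n.1 - 1) + 1
        have := n.2; omega
      rw [h2, List.replicate_succ, List.cons_append, h]
      rfl
    · exact ⟨⟨1, one_pos⟩, n :: l, by rw [ψword_cons]; simp [h]⟩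

variable {X : Type}

lemma basisFreeMonoid_apply (w : FreeMonoid X) :
    basisFreeMonoid k X w =
      (equivMonoidAlgebraFreeMonoid (R := k) (X := X)).symm (MonoidAlgebra.single w 1) := by
  simp only [basisFreeMonoid, Module.Basis.map_apply, Finsupp.coe_basisSingleOne]
  rfl

lemma basisFreeMonoid_mul (w₁ w₂ : FreeMonoid X) :
    basisFreeMonoid k X (w₁ * w₂) = basisFreeMonoid k X w₁ * basisFreeMonoid k X w₂ := by
  rw [basisFreeMonoid_apply, basisFreeMonoid_apply, basisFreeMonoid_apply, ← map_mul]
  congr 1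
  rw [MonoidAlgebra.single_mul_single, one_mul]

lemma basisFreeMonoid_one : basisFreeMonoid k X (1 : FreeMonoid X) = 1 := by
  rw [basisFreeMonoid_apply, ← MonoidAlgebra.one_def, map_one]

lemma basisFreeMonoid_of (x : X) : basisFreeMonoid k X (FreeMonoid.of x) = ι k x := by
  rw [basisFreeMonoid_apply]
  apply (equivMonoidAlgebraFreeMonoid (R := k) (X := X)).injective
  rw [AlgEquiv.apply_symm_apply]
  show _ = (equivMonoidAlgebraFreeMonoid (R := k) (X := X)) (ι k x)
  rw [equivMonoidAlgebraFreeMonoid]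
  simp [MonoidAlgebra.of_apply]

lemma basisFreeMonoid_ofList (s : List X) :
    basisFreeMonoid k X (FreeMonoid.ofList s) = (s.map (ι k)).prod := by
  induction s with
  | nil => simpa [FreeMonoid.ofList_nil] using basisFreeMonoid_one k
  | cons a t ih =>
    rw [FreeMonoid.ofList_cons, basisFreeMonoid_mul, basisFreeMonoid_of, ih]
    simp

/-- the basic computation: `yMap` sends a basis monomial to a signed basis monomial -/
lemma yMap_basis (l : List Ygen) :
    yMap k (basisFreeMonoid k Ygen (FreeMonoid.ofList l)) =
      ((-1 : k) ^ l.length) •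
        basisFreeMonoid k (Fin 2) (FreeMonoid.ofList (ψword l)) := by
  induction l with
  | nil => simp [FreeMonoid.ofList_nil, basisFreeMonoid_one, ψword_nil]
  | cons n l ih =>
    rw [FreeMonoid.ofList_cons, basisFreeMonoid_mul, map_mul, basisFreeMonoid_of, ih]
    rw [basisFreeMonoid_ofList, basisFreeMonoid_ofList, ψword_cons]
    have hy : yMap k (ι k n) = -((ι k (0 : Fin 2)) ^ (n.1 - 1) * ι k (1 : Fin 2)) := by
      simp [yMap]
    rw [hy]
    have hb : ((List.replicate (n.1 - 1) (0 : Fin 2) ++ 1 :: ψword l).map (ι k)).prod =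
        ((ι k (0 : Fin 2)) ^ (n.1 - 1) * ι k (1 : Fin 2)) * ((ψword l).map (ι k)).prod := by
      simp [List.map_append, List.prod_append, List.prod_replicate, mul_assoc]
    rw [hb, List.length_cons, pow_succ]
    rw [mul_smul_comm]
    simp only [neg_mul, mul_assoc, smul_neg, mul_neg_one, neg_smul]

end Aux

section Main

variable {k}

lemma mem_WDR_iff {x : VDR k} :
    x ∈ WDR k ↔ ∃ (c : k) (v : VDR k), x = algebraMap k (VDR k) c + v * ι k (1 : Fin 2) := by
  rw [WDR, Submodule.mem_sup]
  constructor
  · rintro ⟨y, hy, z, hz, rfl⟩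
    obtain ⟨c, rfl⟩ := Submodule.mem_span_singleton.mp hy
    obtain ⟨v, rfl⟩ := hz
    exact ⟨c, v, by rw [LinearMap.mulRight_apply, Algebra.algebraMap_eq_smul_one]⟩
  · rintro ⟨c, v, rfl⟩
    exact ⟨algebraMap k (VDR k) c,
      Submodule.mem_span_singleton.mpr ⟨c, (Algebra.algebraMap_eq_smul_one c).symm⟩,
      v * ι k 1, ⟨v, rfl⟩, rfl⟩

lemma WDR_mul_mem {x y : VDR k} (hx : x ∈ WDR k) (hy : y ∈ WDR k) : x * y ∈ WDR k := by
  obtain ⟨c, v, rfl⟩ := mem_WDR_iff.mp hx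
  obtain ⟨d, w, rfl⟩ := mem_WDR_iff.mp hy
  refine mem_WDR_iff.mpr ⟨c * d,
    algebraMap k (VDR k) c * w + v * algebraMap k (VDR k) d + v * ι k 1 * w, ?_⟩
  have hc : ι k (1 : Fin 2) * algebraMap k (VDR k) d
      = algebraMap k (VDR k) d * ι k (1 : Fin 2) := (Algebra.commutes d _).symm
  rw [map_mul]
  simp only [add_mul, mul_add, mul_assoc, hc]
  abel

lemma yMap_mem_WDR (a : FreeAlgebra k Ygen) : yMap k a ∈ WDR k := by
  induction a using FreeAlgebra.induction with
  | grade0 r =>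
    rw [AlgHom.commutes]
    exact mem_WDR_iff.mpr ⟨r, 0, by simp⟩
  | grade1 n =>
    have hy : yMap k (ι k n) = -((ι k (0 : Fin 2)) ^ (n.1 - 1) * ι k (1 : Fin 2)) := by
      simp [yMap]
    rw [hy]
    exact mem_WDR_iff.mpr ⟨0, -((ι k (0 : Fin 2)) ^ (n.1 - 1)), by simp⟩
  | mul a b ha hb => rw [map_mul]; exact WDR_mul_mem ha hb
  | add a b ha hb => rw [map_add]; exact Submodule.add_mem _ ha hb

lemma yMap_injective : Function.Injective (yMap k) := by
  have hindep : LinearIndependent k fun l : FreeMonoid Ygen =>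
      ((-1 : kˣ) ^ (FreeMonoid.toList l).length) •
        basisFreeMonoid k (Fin 2) (FreeMonoid.ofList (ψword (FreeMonoid.toList l))) := by
    have h1 : LinearIndependent k fun l : FreeMonoid Ygen =>
        basisFreeMonoid k (Fin 2) (FreeMonoid.ofList (ψword (FreeMonoid.toList l))) := by
      have := (basisFreeMonoid k (Fin 2)).linearIndependent.comp
        (fun l : FreeMonoid Ygen => FreeMonoid.ofList (ψword (FreeMonoid.toList l)))
        (fun a b hab => by
          apply ψword_inj at hab
          exact hab)
      exact this
    exact h1.units_smul _
  have hcomp : ∀ l : FreeMonoid Ygen, yMap k (basisFreeMonoid k Ygen l) =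
      ((-1 : kˣ) ^ (FreeMonoid.toList l).length) •
        basisFreeMonoid k (Fin 2) (FreeMonoid.ofList (ψword (FreeMonoid.toList l))) := by
    intro l
    have := yMap_basis k (FreeMonoid.toList l)
    rw [FreeMonoid.ofList_toList] at this
    rw [this, Units.smul_def]
    norm_num
  intro a b hab
  have hz : yMap k (a - b) = 0 := by rw [map_sub, hab, sub_self]
  have hrepr := (basisFreeMonoid k Ygen).linearCombination_repr (a - b)
  have h2 : Finsupp.linearCombination k
      ((yMap k).toLinearMap ∘ ⇑(basisFreeMonoid k Ygen))
      ((basisFreeMonoid k Ygen).repr (a - b)) = 0 := by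
    rw [← Finsupp.apply_linearCombination, hrepr]
    simp only [AlgHom.toLinearMap_apply]; exact hz
  have h3 : ((yMap k).toLinearMap ∘ ⇑(basisFreeMonoid k Ygen) :
      FreeMonoid Ygen → VDR k) = fun l : FreeMonoid Ygen =>
      ((-1 : kˣ) ^ (FreeMonoid.toList l).length) •
        basisFreeMonoid k (Fin 2) (FreeMonoid.ofList (ψword (FreeMonoid.toList l))) := by
    funext l
    simpa using hcomp l
  rw [h3] at h2
  have h0 := linearIndependent_iff.mp hindep _ h2
  have h4 : a - b = 0 := by rw [← hrepr, h0, map_zero]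
  exact sub_eq_zero.mp h4
  
lemma range_eq : Set.range (yMap k) = (WDR k : Set (VDR k)) := by
  apply Set.Subset.antisymm
  · rintro x ⟨a, rfl⟩
    exact yMap_mem_WDR a
  · intro x hx
    let R := Subalgebra.toSubmodule (yMap k).range
    suffices h : WDR k ≤ R by exact h hx
    rw [WDR, sup_le_iff]
    constructor
    · rw [Submodule.span_le, Set.singleton_subset_iff]
      exact ⟨1, map_one _⟩
    · rintro z ⟨v, rfl⟩
      rw [LinearMap.mulRight_apply]
      -- show v * ι k 1 ∈ R for all v
      have hbasis : ∀ w : FreeMonoid (Fin 2),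
          basisFreeMonoid k (Fin 2) w * ι k (1 : Fin 2) ∈ R := by
        intro w
        obtain ⟨n, l, hl⟩ := ψword_surj (FreeMonoid.toList w)
        have hw : basisFreeMonoid k (Fin 2) w * ι k (1 : Fin 2) =
            basisFreeMonoid k (Fin 2) (FreeMonoid.ofList (ψword (n :: l))) := by
          rw [hl, FreeMonoid.ofList_append, basisFreeMonoid_mul, FreeMonoid.ofList_toList,
            FreeMonoid.ofList_singleton, basisFreeMonoid_of]
        rw [hw]
        have hkey := yMap_basis k (n :: l)
        have : basisFreeMonoid k (Fin 2) (FreeMonoid.ofList (ψword (n :: l))) =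
            yMap k (((-1 : k) ^ (n :: l).length) •
              basisFreeMonoid k Ygen (FreeMonoid.ofList (n :: l))) := by
          rw [map_smul, hkey, smul_smul, ← pow_add, ← two_mul, pow_mul]
          norm_num
        rw [this]
        exact ⟨_, rfl⟩
      have hv : v ∈ Submodule.span k (Set.range (basisFreeMonoid k (Fin 2))) := by
        rw [Module.Basis.span_eq]; trivial
      refine Submodule.span_induction ?_ ?_ ?_ ?_ hv
      · rintro x ⟨w, rfl⟩; exact hbasis w
      · simpa using (Subalgebra.toSubmodule (yMap k).range).zero_mem
      · intro x y _ _ hx hy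
        rw [add_mul]; exact Submodule.add_mem _ hx hy
      · intro c x _ hx
        rw [smul_mul_assoc]; exact Submodule.smul_mem _ c hx

end Main

/-- `W^DR` is a free associative algebra, freely generated by the elements
`y_n = -e₀^{n-1} e₁`, `n ≥ 1`: the canonical morphism from the free algebra on
the `y_n` is injective with image exactly `W^DR`. -/
theorem stmt2 : Function.Injective (yMap k) ∧ Set.range (yMap k) = (WDR k : Set (VDR k)) := by
  exact ⟨yMap_injective, range_eq⟩
end

section
/- The quotient M^DR := V^DR / V^DR·e₀ is a free left module of rank one over the subalgebra W^DR = k1 ⊕ V^DR e₁, generated by the class 1_DR of 1. -/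
open FreeAlgebra

variable (k : Type) [CommRing k]

/-- The left ideal `V^DR·e₀`. -/
noncomputable def leftIdealE0 : Submodule (VDR k) (VDR k) :=
  Submodule.span (VDR k) {ι k (0 : Fin 2)}

/-- `M^DR := V^DR / V^DR e₀`. -/
abbrev MDR := VDR k ⧸ leftIdealE0 k

lemma equiv_iota (i : Fin 2) :
    equivMonoidAlgebraFreeMonoid (ι k i)
      = MonoidAlgebra.single (FreeMonoid.of i) (1 : k) := by
  simp [equivMonoidAlgebraFreeMonoid, MonoidAlgebra.of_apply]

lemma not_one_eq_mul_of (i : Fin 2) :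
    ¬ ∃ d : FreeMonoid (Fin 2), (1 : FreeMonoid (Fin 2)) = d * FreeMonoid.of i := by
  rintro ⟨d, hd⟩
  have := congrArg FreeMonoid.toList hd
  simp at this

lemma not_mul_of_eq_mul_of {i j : Fin 2} (hij : i ≠ j) (d : FreeMonoid (Fin 2)) :
    ¬ ∃ e : FreeMonoid (Fin 2), d * FreeMonoid.of i = e * FreeMonoid.of j := by
  rintro ⟨e, he⟩
  have h := congrArg FreeMonoid.toList he
  simp only [FreeMonoid.toList_mul, FreeMonoid.toList_of] at h
  have := (List.append_inj' h rfl).2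
  simp at this
  exact hij this

/-- Key injectivity lemma: `W^DR ∩ V^DR e₀ = 0`. -/
lemma wdr_inter_ideal {x : VDR k} (hW : x ∈ WDR k) (hI : x ∈ leftIdealE0 k) : x = 0 := by
  obtain ⟨y, hy, z, hz, rfl⟩ := Submodule.mem_sup.mp hW
  obtain ⟨c, rfl⟩ := Submodule.mem_span_singleton.mp hy
  obtain ⟨v, rfl⟩ := hz
  obtain ⟨u, hu⟩ := Submodule.mem_span_singleton.mp hI
  set E := equivMonoidAlgebraFreeMonoid (R := k) (X := Fin 2)
  rw [LinearMap.mulRight_apply] at *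
  rw [smul_eq_mul] at hu
  have h1 : E (c • (1 : VDR k) + v * ι k 1)
      = c • (MonoidAlgebra.single (1 : FreeMonoid (Fin 2)) (1 : k))
        + E v * MonoidAlgebra.single (FreeMonoid.of (1 : Fin 2)) 1 := by
    rw [map_add, map_smul, map_one, map_mul, equiv_iota, MonoidAlgebra.one_def]
  have h2 : E (c • (1 : VDR k) + v * ι k 1)
      = E u * MonoidAlgebra.single (FreeMonoid.of (0 : Fin 2)) 1 := by
    rw [← hu, map_mul, equiv_iota]
  have hzero : E (c • (1 : VDR k) + v * ι k 1) = 0 := by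
    ext z
    by_cases hcase : ∃ d : FreeMonoid (Fin 2), z = d * FreeMonoid.of (0 : Fin 2)
    · obtain ⟨d, rfl⟩ := hcase
      rw [h1]
      have hz1 : (d * FreeMonoid.of (0 : Fin 2)) ≠ 1 := by
        intro h
        exact not_one_eq_mul_of 0 ⟨d, h.symm⟩
      have := MonoidAlgebra.mul_single_apply_of_not_exists_mul (1 : k)
        (E v) (not_mul_of_eq_mul_of (by decide : (0 : Fin 2) ≠ 1) d)
      rw [MonoidAlgebra.coeff_add, Finsupp.add_apply, this, add_zero]
      simp [Finsupp.single_apply, Ne.symm hz1]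
    · rw [h2]
      have := MonoidAlgebra.mul_single_apply_of_not_exists_mul (1 : k) (E u)
        (fun ⟨d, hd⟩ => hcase ⟨d, hd⟩)
      simp [this]
  have hx : E (c • (1 : VDR k) + v * ι k 1) = E 0 := by rw [hzero, map_zero]
  exact E.injective hx

/-- Key surjectivity lemma: `W^DR + V^DR e₀ = V^DR`. -/
lemma wdr_sup_ideal (x : VDR k) :
    x ∈ (WDR k ⊔ LinearMap.range (LinearMap.mulRight k (ι k (0 : Fin 2))) :
      Submodule k (VDR k)) := by
  set S : Submodule k (VDR k) :=
    WDR k ⊔ LinearMap.range (LinearMap.mulRight k (ι k (0 : Fin 2))) with hS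
  induction x using FreeAlgebra.induction with
  | grade0 r =>
    apply Submodule.mem_sup_left
    apply Submodule.mem_sup_left
    rw [Algebra.algebraMap_eq_smul_one]
    exact Submodule.smul_mem _ _ (Submodule.mem_span_singleton_self _)
  | grade1 i =>
    fin_cases i
    · apply Submodule.mem_sup_right
      exact ⟨1, one_mul _⟩
    · apply Submodule.mem_sup_left
      apply Submodule.mem_sup_right
      exact ⟨1, one_mul _⟩
  | add a b ha hb => exact Submodule.add_mem _ ha hb
  | mul a b ha hb =>
    obtain ⟨y, hy, z, hz, rfl⟩ := Submodule.mem_sup.mp hb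
    obtain ⟨y₁, hy₁, y₂, hy₂, rfl⟩ := Submodule.mem_sup.mp hy
    obtain ⟨c, rfl⟩ := Submodule.mem_span_singleton.mp hy₁
    obtain ⟨v, rfl⟩ := hy₂
    obtain ⟨u, rfl⟩ := hz
    rw [LinearMap.mulRight_apply, LinearMap.mulRight_apply]
    rw [mul_add, mul_add, mul_smul_comm, mul_one, ← mul_assoc, ← mul_assoc]
    refine Submodule.add_mem _ (Submodule.add_mem _ (Submodule.smul_mem _ _ ha) ?_) ?_
    · exact Submodule.mem_sup_left (Submodule.mem_sup_right ⟨a * v, rfl⟩)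
    · exact Submodule.mem_sup_right ⟨a * u, rfl⟩

/-- `M^DR` is a free left `W^DR`-module of rank one, generated by the class
`1_DR` of `1`: the map `W^DR → M^DR`, `w ↦ w · 1_DR`, is bijective. -/
theorem stmt3 :
    Function.Bijective (fun w : WDR k => (Submodule.Quotient.mk (w : VDR k) : MDR k)) := by
  constructor
  · intro a b hab
    have h : ((a : VDR k) - b) ∈ leftIdealE0 k := (Submodule.Quotient.eq _).mp hab
    have h2 : ((a : VDR k) - b) ∈ WDR k := sub_mem a.2 b.2
    have := wdr_inter_ideal k h2 h
    exact Subtype.ext (sub_eq_zero.mp this)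
  · intro m
    obtain ⟨x, rfl⟩ := Submodule.Quotient.mk_surjective _ m
    obtain ⟨w, hw, z, hz, rfl⟩ := Submodule.mem_sup.mp (wdr_sup_ideal k x)
    obtain ⟨u, rfl⟩ := hz
    refine ⟨⟨w, hw⟩, ?_⟩
    rw [LinearMap.mulRight_apply]
    apply (Submodule.Quotient.eq _).mpr
    have : w - (w + u * ι k 0) = (-u) • ι k 0 := by
      rw [smul_eq_mul, neg_mul]; abel
    rw [this]
    exact Submodule.smul_mem _ _ (Submodule.mem_span_singleton_self _)
end

section
/- Let V^B be the group algebra k[F₂] of the free group on X₀, X₁, and let V^B₊ be the augmentation ideal. Then the filtration F^k V^B := (V^B₊)^k is an algebra filtration, and the associated graded algebra gr(V^B) is isomorphic, as a graded k-algebra, to the free associative algebra V^DR = k⟨e₀,e₁⟩ via the map sending the class of X_i - 1 in gr₁ to e_i. -/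
variable (k : Type) [CommRing k]

/-- `V^B = k[F₂]`, the group algebra of the free group on `X₀, X₁`. -/
abbrev VB := MonoidAlgebra k (FreeGroup (Fin 2))

/-- The generators `X₀, X₁` of the free group, inside the group algebra. -/
noncomputable def XB (i : Fin 2) : VB k := MonoidAlgebra.of k (FreeGroup (Fin 2)) (FreeGroup.of i)

/-- The augmentation ideal `V^B₊`, kernel of the algebra map sending all group
elements to `1`. -/
noncomputable def augIdeal : Submodule k (VB k) :=
  LinearMap.ker (MonoidAlgebra.lift k k (FreeGroup (Fin 2)) 1).toLinearMap

/-- The augmentation-ideal filtration `F^n = (V^B₊)^n` (with `F^0 = V^B`). -/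
noncomputable def FB : ℕ → Submodule k (VB k)
  | 0 => ⊤
  | (n + 1) => augIdeal k ^ (n + 1)

/-- `F^{n+1}` viewed as a submodule of `F^n`. -/
noncomputable def FBsub (n : ℕ) : Submodule k ↥(FB k n) :=
  Submodule.comap (FB k n).subtype (FB k (n + 1))

/-- The weight grading of the free algebra `V^DR = k⟨e₀,e₁⟩`: the `n`-th piece
is spanned by the products of `n` generators. -/
noncomputable def gradeDR (n : ℕ) : Submodule k (FreeAlgebra k (Fin 2)) :=
  Submodule.span k {x | ∃ l : List (Fin 2), l.length = n ∧ x = (l.map (FreeAlgebra.ι k)).prod}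

noncomputable section
namespace S6

abbrev FA := FreeAlgebra k (Fin 2)
abbrev PS := PowerSeries (FA k)

variable {k}

def eg (i : Fin 2) : FA k := FreeAlgebra.ι k i

open PowerSeries in
def uval (i : Fin 2) : PS k := 1 + PowerSeries.C (eg i) * PowerSeries.X

open PowerSeries in
def uinv (i : Fin 2) : PS k := PowerSeries.mk fun t => (-eg i) ^ t

open PowerSeries in
lemma uval_mul_uinv (i : Fin 2) : uval (k := k) i * uinv i = 1 := by
  ext d
  rw [uval, add_mul, one_mul, mul_assoc]
  cases d with
  | zero => simp [uinv, coeff_C_mul, coeff_zero_X_mul]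
  | succ n =>
    simp only [map_add, uinv, coeff_mk, coeff_C_mul, coeff_succ_X_mul, coeff_one,
      Nat.succ_ne_zero, if_false, pow_succ]
    rw [← pow_succ, pow_succ', neg_mul]
    exact neg_add_cancel _

end S6

namespace S6
open PowerSeries
variable {k}

lemma uinv_mul_uval (i : Fin 2) : uinv (k := k) i * uval i = 1 := by
  ext d
  rw [uval, mul_add, mul_one, ← mul_assoc]
  cases d with
  | zero => simp [uinv, coeff_mul_C, coeff_zero_mul_X]
  | succ n =>
    simp only [map_add, uinv, coeff_mk, coeff_mul_C, coeff_succ_mul_X, coeff_one,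
      Nat.succ_ne_zero, if_false, pow_succ]
    simp [mul_neg]

def U (i : Fin 2) : (PS k)ˣ :=
  ⟨uval i, uinv i, uval_mul_uinv i, uinv_mul_uval i⟩

def mon : FreeGroup (Fin 2) →* PS k :=
  (Units.coeHom (PS k)).comp (FreeGroup.lift (U (k := k)))

def mu : VB k →ₐ[k] PS k := MonoidAlgebra.lift k (PS k) (FreeGroup (Fin 2)) mon

def alpha : FreeAlgebra k (Fin 2) →ₐ[k] VB k := FreeAlgebra.lift k (fun i => XB k i - 1)

lemma mu_X (i : Fin 2) : mu (XB k i) = uval i := by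
  simp [mu, XB, MonoidAlgebra.lift_of, mon, U]

lemma alpha_i (i : Fin 2) : alpha (FreeAlgebra.ι k i) = XB k i - 1 := by
  simp [alpha]

lemma mu_alpha_i (i : Fin 2) : mu (alpha (FreeAlgebra.ι k i)) = monomial 1 (eg i) := by
  rw [alpha_i, map_sub, mu_X, map_one, uval, add_sub_cancel_left]
  ext d
  simp [coeff_C_mul, coeff_X, coeff_monomial, mul_ite]

end S6

namespace S6
open PowerSeries
variable {k}

lemma one_mem_grade0 : (1 : FA k) ∈ gradeDR k 0 :=
  Submodule.subset_span ⟨[], rfl, by simp⟩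

lemma eg_mem_grade1 (i : Fin 2) : eg (k := k) i ∈ gradeDR k 1 :=
  Submodule.subset_span ⟨[i], rfl, by simp [eg]⟩

lemma gradeDR_mul_le (a b : ℕ) : gradeDR k a * gradeDR k b ≤ gradeDR k (a + b) := by
  rw [gradeDR, gradeDR, Submodule.span_mul_span]
  refine Submodule.span_le.2 ?_
  rintro z ⟨x, ⟨l, hl, rfl⟩, y, ⟨l', hl', rfl⟩, rfl⟩
  exact Submodule.subset_span ⟨l ++ l', by simp [hl, hl'], by simp⟩

lemma grade_mul_mem {a b : ℕ} {x y : FA k} (hx : x ∈ gradeDR k a) (hy : y ∈ gradeDR k b) :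
    x * y ∈ gradeDR k (a + b) :=
  gradeDR_mul_le a b (Submodule.mul_mem_mul hx hy)

lemma neg_eg_pow_mem (i : Fin 2) (d : ℕ) : (-eg (k := k) i) ^ d ∈ gradeDR k d := by
  induction d with
  | zero => rw [pow_zero]; exact one_mem_grade0
  | succ n ih =>
    rw [pow_succ]
    exact grade_mul_mem ih (Submodule.neg_mem _ (eg_mem_grade1 i))

/-- Power series whose `d`-th coefficient is homogeneous of degree `d`. -/
def Sgr : Submodule k (PS k) where
  carrier := {f | ∀ d, coeff d f ∈ gradeDR k d}
  add_mem' := fun hf hg d => by rw [map_add]; exact Submodule.add_mem _ (hf d) (hg d)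
  zero_mem' := fun d => by rw [map_zero]; exact Submodule.zero_mem _
  smul_mem' := fun c f hf d => by rw [coeff_smul]; exact Submodule.smul_mem _ _ (hf d)

lemma one_mem_Sgr : (1 : PS k) ∈ Sgr := by
  intro d
  rw [coeff_one]
  split
  · subst ‹d = 0›; exact one_mem_grade0
  · exact Submodule.zero_mem _

lemma mul_mem_Sgr {f g : PS k} (hf : f ∈ Sgr) (hg : g ∈ Sgr) : f * g ∈ Sgr := by
  intro d
  rw [coeff_mul]
  refine Submodule.sum_mem _ fun p hp => ?_
  rw [Finset.HasAntidiagonal.mem_antidiagonal] at hp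
  rw [← hp]
  exact grade_mul_mem (hf p.1) (hg p.2)

lemma uval_mem_Sgr (i : Fin 2) : uval (k := k) i ∈ Sgr := by
  intro d
  rw [uval]
  match d with
  | 0 => simpa [coeff_C_mul, coeff_zero_X_mul] using one_mem_grade0
  | 1 => simpa [coeff_C_mul, coeff_one] using eg_mem_grade1 i
  | (n+2) =>
    have : coeff (R := FA k) (n+2) (1 + C (eg i) * X) = 0 := by
      simp [coeff_C_mul, coeff_one, coeff_X]
    rw [this]; exact Submodule.zero_mem _

lemma uinv_mem_Sgr (i : Fin 2) : uinv (k := k) i ∈ Sgr := by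
  intro d
  rw [uinv, coeff_mk]
  exact neg_eg_pow_mem i d

/-- The subgroup of units with graded value and inverse. -/
def Hgr : Subgroup (PS k)ˣ where
  carrier := {u | (u : PS k) ∈ Sgr ∧ ((u⁻¹ : (PS k)ˣ) : PS k) ∈ Sgr}
  one_mem' := ⟨one_mem_Sgr, by simpa using one_mem_Sgr⟩
  mul_mem' := fun ha hb => ⟨mul_mem_Sgr ha.1 hb.1, by
    rw [mul_inv_rev]; exact mul_mem_Sgr hb.2 ha.2⟩
  inv_mem' := fun ha => ⟨ha.2, by simpa using ha.1⟩

lemma lift_mem_Hgr (g : FreeGroup (Fin 2)) : FreeGroup.lift (U (k := k)) g ∈ Hgr := by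
  induction g with
  | C1 => rw [map_one]; exact one_mem _
  | of i =>
    have h : FreeGroup.lift (U (k := k)) (FreeGroup.of i) = U i := FreeGroup.lift_apply_of
    rw [h]
    exact ⟨uval_mem_Sgr i, uinv_mem_Sgr i⟩
  | inv_of i h => rw [map_inv]; exact inv_mem h
  | mul x y hx hy => rw [map_mul]; exact mul_mem hx hy

lemma mon_mem_Sgr (g : FreeGroup (Fin 2)) : mon (k := k) g ∈ Sgr :=
  (lift_mem_Hgr g).1

lemma mu_mem_Sgr (x : VB k) : mu x ∈ Sgr := by
  induction x using MonoidAlgebra.induction_linear with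
  | zero => rw [map_zero]; exact Submodule.zero_mem _
  | add f g hf hg => rw [map_add]; exact Submodule.add_mem _ hf hg
  | single g c =>
    have : (MonoidAlgebra.single g c : VB k) = c • (MonoidAlgebra.of k (FreeGroup (Fin 2)) g) := by
      rw [MonoidAlgebra.of_apply, MonoidAlgebra.smul_single, smul_eq_mul, mul_one]
    rw [this, map_smul]
    exact Submodule.smul_mem _ _ (by simpa [mu, MonoidAlgebra.lift_of] using mon_mem_Sgr g)

lemma coeff_mu_mem (x : VB k) (n : ℕ) : coeff n (mu x) ∈ gradeDR k n :=
  mu_mem_Sgr x n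

end S6

namespace S6
open PowerSeries
variable {k}

/-- Power series divisible by `X^m`. -/
def Jf (m : ℕ) : Submodule k (PS k) where
  carrier := {f | ∀ d < m, coeff d f = 0}
  add_mem' := fun hf hg d hd => by rw [map_add, hf d hd, hg d hd, add_zero]
  zero_mem' := fun d _ => map_zero _
  smul_mem' := fun c f hf d hd => by rw [coeff_smul, hf d hd, smul_zero]

lemma Jf_mul_le (a b : ℕ) {f g : PS k} (hf : f ∈ Jf a) (hg : g ∈ Jf b) :
    f * g ∈ Jf (a + b) := by
  intro d hd
  rw [coeff_mul]
  refine Finset.sum_eq_zero fun p hp => ?_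
  rw [Finset.HasAntidiagonal.mem_antidiagonal] at hp
  rcases lt_or_ge p.1 a with h | h
  · rw [hf p.1 h, zero_mul]
  · rw [hg p.2 (by omega), mul_zero]

/-- The augmentation `ε : VB → k`. -/
def eps : VB k →ₐ[k] k := MonoidAlgebra.lift k k (FreeGroup (Fin 2)) 1

lemma constCoeff_lift (g : FreeGroup (Fin 2)) :
    constantCoeff ((FreeGroup.lift (U (k := k)) g : (PS k)ˣ) : PS k) = 1 ∧
    constantCoeff (((FreeGroup.lift (U (k := k)) g)⁻¹ : (PS k)ˣ) : PS k) = 1 := by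
  induction g with
  | C1 => rw [map_one]; constructor <;> simp
  | of i =>
    have h : FreeGroup.lift (U (k := k)) (FreeGroup.of i) = U i := FreeGroup.lift_apply_of
    rw [h]
    constructor
    · show constantCoeff (uval i) = 1
      simp [uval, ← coeff_zero_eq_constantCoeff, coeff_C_mul, coeff_zero_X_mul]
    · show constantCoeff (uinv i) = 1
      simp [uinv, ← coeff_zero_eq_constantCoeff]
  | inv_of i h => rw [map_inv]; exact ⟨h.2, by simpa using h.1⟩
  | mul x y hx hy =>
    rw [map_mul]
    constructor
    · rw [Units.val_mul, map_mul, hx.1, hy.1, one_mul]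
    · rw [mul_inv_rev, Units.val_mul, map_mul, hx.2, hy.2, one_mul]

lemma constCoeff_mu (x : VB k) :
    coeff 0 (mu x) = algebraMap k (FA k) (eps x) := by
  induction x using MonoidAlgebra.induction_linear with
  | zero => rw [map_zero, map_zero, map_zero, map_zero]
  | add f g hf hg => rw [map_add, map_add, map_add, map_add, hf, hg]
  | single g c =>
    have h1 : (MonoidAlgebra.single g c : VB k) = c • (MonoidAlgebra.of k (FreeGroup (Fin 2)) g) := by
      rw [MonoidAlgebra.of_apply, MonoidAlgebra.smul_single, smul_eq_mul, mul_one]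
    rw [h1, map_smul, coeff_smul, map_smul]
    have h2 : mu (MonoidAlgebra.of k (FreeGroup (Fin 2)) g) = mon (k := k) g := by
      simp [mu, MonoidAlgebra.lift_of]
    have h3 : eps (MonoidAlgebra.of k (FreeGroup (Fin 2)) g) = 1 := by
      simp [eps, MonoidAlgebra.lift_of]
    rw [h2, h3]
    have h4 : coeff 0 (mon (k := k) g) = 1 := by
      rw [coeff_zero_eq_constantCoeff]; exact (constCoeff_lift g).1
    rw [h4]
    simp [Algebra.algebraMap_eq_smul_one]

lemma mu_aug_mem_Jf1 {x : VB k} (hx : x ∈ augIdeal k) : mu x ∈ Jf 1 := by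
  intro d hd
  interval_cases d
  rw [constCoeff_mu]
  have : eps (k := k) x = 0 := hx
  rw [this, map_zero]

lemma mu_FB_mem_Jf {n : ℕ} {x : VB k} (hx : x ∈ FB k n) : mu x ∈ Jf n := by
  match n with
  | 0 => intro d hd; omega
  | (m+1) =>
    have key : ∀ j : ℕ, Submodule.map (mu (k := k)).toLinearMap (augIdeal k ^ (j+1)) ≤ Jf (j+1) := by
      intro j
      induction j with
      | zero =>
        rw [pow_one]
        rintro _ ⟨y, hy, rfl⟩
        exact mu_aug_mem_Jf1 hy
      | succ m ih =>
        rw [pow_succ, Submodule.map_mul]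
        refine Submodule.mul_le.2 fun a ha b hb => ?_
        obtain ⟨a', ha', rfl⟩ := ha
        obtain ⟨b', hb', rfl⟩ := hb
        exact Jf_mul_le (m+1) 1 (ih ⟨a', ha', rfl⟩) (mu_aug_mem_Jf1 hb')
    exact key m ⟨x, hx, rfl⟩

end S6

namespace S6
open PowerSeries
variable {k}

/-- `coeff` as a `k`-linear map. -/
def coeffk (n : ℕ) : PS k →ₗ[k] FA k where
  toFun := coeff n
  map_add' := fun f g => map_add _ f g
  map_smul' := fun c f => coeff_smul n f c

@[simp] lemma coeffk_apply (n : ℕ) (f : PS k) : coeffk n f = coeff n f := rfl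

lemma mono_mul (a b : ℕ) (x y : FA k) :
    monomial a x * monomial b y = monomial (a + b) (x * y) := by
  ext d
  rw [coeff_mul, coeff_monomial]
  split
  · subst ‹d = a + b›
    rw [Finset.sum_eq_single (a, b)]
    · simp [coeff_monomial]
    · rintro ⟨p, q⟩ hpq hne
      rw [Finset.HasAntidiagonal.mem_antidiagonal] at hpq
      rw [coeff_monomial, coeff_monomial]
      have : p ≠ a ∨ q ≠ b := by
        by_contra hc
        push_neg at hc
        exact hne (by simp [hc.1, hc.2])
      rcases this with h | h
      · rw [if_neg h, zero_mul]
      · rw [if_neg h, mul_zero]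
    · intro h
      exact absurd (Finset.HasAntidiagonal.mem_antidiagonal.2 (rfl : a + b = a + b)) h
  · refine Finset.sum_eq_zero fun p hp => ?_
    rw [Finset.HasAntidiagonal.mem_antidiagonal] at hp
    rw [coeff_monomial, coeff_monomial]
    have : p.1 ≠ a ∨ p.2 ≠ b := by
      by_contra hc
      push_neg at hc
      exact ‹¬ d = a + b› (by omega)
    rcases this with h | h
    · rw [if_neg h, zero_mul]
    · rw [if_neg h, mul_zero]

lemma mu_alpha_mono (l : List (Fin 2)) :
    mu (alpha ((l.map (FreeAlgebra.ι k)).prod)) =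
      monomial l.length ((l.map (FreeAlgebra.ι k)).prod) := by
  induction l with
  | nil => simp [monomial_zero_eq_C_apply]
  | cons i t ih =>
    rw [List.map_cons, List.prod_cons, map_mul, map_mul, ih, mu_alpha_i, mono_mul]
    rw [eg, List.length_cons, Nat.add_comm]

lemma coeff_mu_alpha_grade {n : ℕ} {w : FA k} (hw : w ∈ gradeDR k n) :
    coeff n (mu (alpha w)) = w := by
  have : gradeDR k n ≤ LinearMap.eqLocus
      ((coeffk n).comp ((mu (k := k)).toLinearMap.comp (alpha (k := k)).toLinearMap))
      LinearMap.id := by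
    refine Submodule.span_le.2 ?_
    rintro x ⟨l, rfl, rfl⟩
    show coeffk _ (mu (alpha _)) = _
    rw [coeffk_apply, mu_alpha_mono, coeff_monomial, if_pos rfl]
    rfl
  exact this hw

lemma eps_of (g : FreeGroup (Fin 2)) : eps (MonoidAlgebra.of k (FreeGroup (Fin 2)) g) = 1 := by
  simp [eps, MonoidAlgebra.lift_of]

lemma of_sub_one_mem (g : FreeGroup (Fin 2)) :
    MonoidAlgebra.of k (FreeGroup (Fin 2)) g - 1 ∈ augIdeal k := by
  have : eps (MonoidAlgebra.of k (FreeGroup (Fin 2)) g - 1) = 0 := by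
    rw [map_sub, eps_of, map_one, sub_self]
  exact this

lemma XB_sub_one_mem (i : Fin 2) : XB k i - 1 ∈ augIdeal k := of_sub_one_mem _

lemma alpha_mono_mem_pow (l : List (Fin 2)) :
    alpha ((l.map (FreeAlgebra.ι k)).prod) ∈ augIdeal k ^ l.length := by
  induction l with
  | nil =>
    simp only [List.map_nil, List.prod_nil, map_one, List.length_nil, pow_zero]
    rw [Submodule.one_eq_span]
    exact Submodule.subset_span rfl
  | cons i t ih =>
    rw [List.map_cons, List.prod_cons, map_mul, List.length_cons, pow_succ']
    exact Submodule.mul_mem_mul (by rw [alpha_i]; exact XB_sub_one_mem i) ih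

/-- Image of degree-`n` part under `alpha`. -/
def Mg (n : ℕ) : Submodule k (VB k) := Submodule.map (alpha (k := k)).toLinearMap (gradeDR k n)

lemma Mg_le_pow (n : ℕ) : Mg (k := k) n ≤ augIdeal k ^ n := by
  rw [Mg, gradeDR, Submodule.map_span]
  refine Submodule.span_le.2 ?_
  rintro _ ⟨x, ⟨l, hl, rfl⟩, rfl⟩
  rw [← hl]
  exact alpha_mono_mem_pow l

lemma Mg_le_FB (n : ℕ) : Mg (k := k) n ≤ FB k n := by
  match n with
  | 0 => exact le_top
  | (m+1) => exact Mg_le_pow (m+1)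

end S6

namespace S6
open PowerSeries
variable {k}

lemma FB_succ (n : ℕ) : FB k (n+1) = augIdeal k ^ (n+1) := rfl

lemma aug_mul_le : augIdeal k * augIdeal k ≤ augIdeal k := by
  refine Submodule.mul_le.2 fun a ha b hb => ?_
  have : eps (k := k) (a * b) = 0 := by
    rw [map_mul, show eps (k := k) a = 0 from ha, zero_mul]
  exact this

lemma top_mul_aug_le : (⊤ : Submodule k (VB k)) * augIdeal k ≤ augIdeal k := by
  refine Submodule.mul_le.2 fun a _ b hb => ?_
  have : eps (k := k) (a * b) = 0 := by
    rw [map_mul, show eps (k := k) b = 0 from hb, mul_zero]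
  exact this

lemma aug_mul_top_le : augIdeal k * (⊤ : Submodule k (VB k)) ≤ augIdeal k := by
  refine Submodule.mul_le.2 fun a ha b _ => ?_
  have : eps (k := k) (a * b) = 0 := by
    rw [map_mul, show eps (k := k) a = 0 from ha, zero_mul]
  exact this

lemma pow_mul_aug_le (m : ℕ) : augIdeal k ^ (m+1) * augIdeal k ≤ augIdeal k ^ (m+1) := by
  induction m with
  | zero => rw [pow_one]; exact aug_mul_le
  | succ n ih =>
    have h1 : augIdeal k ^ (n+2) * augIdeal k = augIdeal k ^ (n+1) * (augIdeal k * augIdeal k) := by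
      rw [pow_succ, mul_assoc]
    rw [h1]
    have h2 : augIdeal k ^ (n+1) * (augIdeal k * augIdeal k) ≤ augIdeal k ^ (n+1) * augIdeal k :=
      mul_le_mul_right aug_mul_le _
    rw [← pow_succ] at h2
    exact h2

lemma pow_top_mul_le (m : ℕ) :
    (⊤ : Submodule k (VB k)) * augIdeal k ^ (m+1) ≤ augIdeal k ^ (m+1) := by
  induction m with
  | zero => rw [pow_one]; exact top_mul_aug_le
  | succ n ih =>
    have h1 : (⊤ : Submodule k (VB k)) * augIdeal k ^ (n+2) =
        ((⊤ : Submodule k (VB k)) * augIdeal k ^ (n+1)) * augIdeal k := by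
      rw [pow_succ, mul_assoc]
    rw [h1]
    have h2 := mul_le_mul_left ih (augIdeal k)
    rw [← pow_succ] at h2
    exact h2

lemma pow_mul_top_le (m : ℕ) :
    augIdeal k ^ (m+1) * (⊤ : Submodule k (VB k)) ≤ augIdeal k ^ (m+1) := by
  induction m with
  | zero => rw [pow_one]; exact aug_mul_top_le
  | succ n ih =>
    have h1 : augIdeal k ^ (n+2) * (⊤ : Submodule k (VB k)) =
        augIdeal k ^ (n+1) * (augIdeal k * ⊤) := by
      rw [pow_succ, mul_assoc]
    rw [h1]
    have h2 : augIdeal k ^ (n+1) * (augIdeal k * ⊤) ≤ augIdeal k ^ (n+1) * augIdeal k :=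
      mul_le_mul_right aug_mul_top_le _
    rw [← pow_succ] at h2
    exact h2

lemma FB_mul_le (m n : ℕ) {x y : VB k} (hx : x ∈ FB k m) (hy : y ∈ FB k n) :
    x * y ∈ FB k (m + n) := by
  match m, n with
  | 0, 0 => exact trivial
  | 0, (n+1) =>
    have := pow_top_mul_le (k := k) n (Submodule.mul_mem_mul (trivial : x ∈ ⊤) hy)
    simpa [FB_succ] using this
  | (m+1), 0 =>
    have := pow_mul_top_le (k := k) m (Submodule.mul_mem_mul hx (trivial : y ∈ ⊤))
    simpa [FB_succ] using this
  | (m+1), (n+1) =>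
    have : x * y ∈ augIdeal k ^ (m+1) * augIdeal k ^ (n+1) := Submodule.mul_mem_mul hx hy
    rw [← pow_add] at this
    rw [show (m+1) + (n+1) = (m + n + 1) + 1 by omega] at this ⊢
    exact this

lemma decomp0 : (⊤ : Submodule k (VB k)) ≤ Mg 0 ⊔ augIdeal k := by
  intro x _
  have hx : x = eps x • (1 : VB k) + (x - eps x • 1) := by abel
  rw [hx]
  refine Submodule.add_mem_sup ?_ ?_
  · refine ⟨eps x • 1, Submodule.smul_mem _ _ one_mem_grade0, ?_⟩
    show alpha (eps x • 1) = eps x • 1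
    rw [map_smul, map_one]
  · have : eps (k := k) (x - eps x • 1) = 0 := by
      rw [map_sub, map_smul, map_one, smul_eq_mul, mul_one, sub_self]
    exact this

/-- `x ↦ x - ε(x) • 1`. -/
def rho : VB k →ₗ[k] VB k :=
  LinearMap.id - (LinearMap.toSpanSingleton k (VB k) 1).comp (eps (k := k)).toLinearMap

lemma rho_apply (x : VB k) : rho x = x - eps x • 1 := rfl

lemma rho_mem (x : VB k) : rho x ∈ Mg (k := k) 1 ⊔ augIdeal k ^ 2 := by
  set W := Mg (k := k) 1 ⊔ augIdeal k ^ 2 with hW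
  have hg : ∀ g : FreeGroup (Fin 2), MonoidAlgebra.of k (FreeGroup (Fin 2)) g - 1 ∈ W := by
    intro g
    induction g with
    | C1 => rw [map_one, sub_self]; exact Submodule.zero_mem _
    | of i =>
      refine Submodule.mem_sup_left ⟨FreeAlgebra.ι k i, ?_, ?_⟩
      · exact Submodule.subset_span ⟨[i], rfl, by simp⟩
      · show alpha (FreeAlgebra.ι k i) = _
        rw [alpha_i]
        rfl
    | inv_of i h =>
      set X := MonoidAlgebra.of k (FreeGroup (Fin 2)) (FreeGroup.of i) with hX
      set Y := MonoidAlgebra.of k (FreeGroup (Fin 2)) (FreeGroup.of i)⁻¹ with hY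
      have hmul : Y * X = 1 := by
        rw [hX, hY, ← map_mul, inv_mul_cancel, map_one]
      have key : Y - 1 = -(X - 1) - (Y - 1) * (X - 1) := by
        have expand : (Y - 1) * (X - 1) = Y * X - Y - X + 1 := by noncomm_ring
        rw [expand, hmul]
        abel
      rw [key]
      refine Submodule.sub_mem _ (Submodule.neg_mem _ h) ?_
      refine Submodule.mem_sup_right ?_
      rw [pow_two]
      exact Submodule.mul_mem_mul (of_sub_one_mem _) (of_sub_one_mem _)
    | mul x y hx hy =>
      have key : MonoidAlgebra.of k (FreeGroup (Fin 2)) (x * y) - 1 =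
          (MonoidAlgebra.of k (FreeGroup (Fin 2)) x - 1) +
          (MonoidAlgebra.of k (FreeGroup (Fin 2)) y - 1) +
          (MonoidAlgebra.of k (FreeGroup (Fin 2)) x - 1) *
          (MonoidAlgebra.of k (FreeGroup (Fin 2)) y - 1) := by
        rw [map_mul]; noncomm_ring
      rw [key]
      refine Submodule.add_mem _ (Submodule.add_mem _ hx hy) ?_
      refine Submodule.mem_sup_right ?_
      rw [pow_two]
      exact Submodule.mul_mem_mul (of_sub_one_mem _) (of_sub_one_mem _)
  induction x using MonoidAlgebra.induction_linear with
  | zero => rw [map_zero]; exact Submodule.zero_mem _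
  | add f g hf hg => rw [map_add]; exact Submodule.add_mem _ hf hg
  | single g c =>
    have h1 : (MonoidAlgebra.single g c : VB k) = c • (MonoidAlgebra.of k (FreeGroup (Fin 2)) g) := by
      rw [MonoidAlgebra.of_apply, MonoidAlgebra.smul_single, smul_eq_mul, mul_one]
    rw [h1, map_smul]
    refine Submodule.smul_mem _ _ ?_
    have h2 : rho (MonoidAlgebra.of k (FreeGroup (Fin 2)) g) =
        MonoidAlgebra.of k (FreeGroup (Fin 2)) g - 1 := by
      rw [rho_apply, eps_of, one_smul]
    rw [h2]
    exact hg g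

lemma decomp1 : augIdeal k ≤ Mg (k := k) 1 ⊔ augIdeal k ^ 2 := by
  intro x hx
  have h0 : eps (k := k) x = 0 := hx
  have := rho_mem (k := k) x
  rwa [rho_apply, h0, zero_smul, sub_zero] at this

lemma decompS : ∀ n : ℕ, FB k n ≤ Mg (k := k) n ⊔ FB k (n + 1)
  | 0 => by
    have e1 : FB k 1 = augIdeal k ^ 1 := rfl
    rw [e1, pow_one]
    exact decomp0
  | 1 => by
    have e1 : FB k 1 = augIdeal k ^ 1 := rfl
    have e2 : FB k 2 = augIdeal k ^ 2 := rfl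
    rw [e1, e2, pow_one]
    exact decomp1
  | (n+2) => by
    have ih := decompS (n+1)
    have e1 : FB k (n+1) = augIdeal k ^ (n+1) := rfl
    have e2 : FB k (n+2) = augIdeal k ^ (n+2) := rfl
    have e3 : FB k (n+3) = augIdeal k ^ (n+3) := rfl
    rw [e1, show n+1+1 = n+2 from rfl, e2] at ih
    rw [e2, show n+2+1 = n+3 from rfl, e3]
    have h2 : augIdeal k ^ (n+1) * augIdeal k ≤
        (Mg (k := k) (n+1) ⊔ augIdeal k ^ (n+2)) * (Mg (k := k) 1 ⊔ augIdeal k ^ 2) :=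
      mul_le_mul' ih decomp1
    rw [← pow_succ] at h2
    refine h2.trans ?_
    rw [Submodule.sup_mul, Submodule.mul_sup, Submodule.mul_sup]
    have b1 : Mg (k := k) (n+1) * Mg (k := k) 1 ≤ Mg (k := k) (n+2) := by
      rw [Mg, Mg, Mg, ← Submodule.map_mul]
      exact Submodule.map_mono (gradeDR_mul_le (n+1) 1)
    have b2 : Mg (k := k) (n+1) * augIdeal k ^ 2 ≤ augIdeal k ^ (n+3) := by
      have := mul_le_mul_left (Mg_le_pow (k := k) (n+1)) (augIdeal k ^ 2)
      rwa [← pow_add] at this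
    have b3 : augIdeal k ^ (n+2) * Mg (k := k) 1 ≤ augIdeal k ^ (n+3) := by
      have h := mul_le_mul_right (Mg_le_pow (k := k) 1) (augIdeal k ^ (n+2))
      rwa [pow_one, ← pow_succ] at h
    have b4 : augIdeal k ^ (n+2) * augIdeal k ^ 2 ≤ augIdeal k ^ (n+3) := by
      have h1 : augIdeal k ^ (n+2) * augIdeal k ^ 2 =
          (augIdeal k ^ (n+2) * augIdeal k) * augIdeal k := by
        rw [pow_two, mul_assoc]
      rw [h1]
      have h2 := mul_le_mul_left (pow_mul_aug_le (k := k) (n+1)) (augIdeal k)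
      rw [← pow_succ] at h2
      exact h2
    have hFB3 : augIdeal k ^ (n+3) ≤ Mg (k := k) (n+2) ⊔ augIdeal k ^ (n+3) := le_sup_right
    exact sup_le (sup_le (b1.trans le_sup_left) (b2.trans hFB3))
      (sup_le (b3.trans hFB3) (b4.trans hFB3))

end S6

namespace S6
open PowerSeries
variable {k}

lemma alpha_grade_mem_FB {n : ℕ} {w : FA k} (hw : w ∈ gradeDR k n) : alpha w ∈ FB k n :=
  Mg_le_FB n ⟨w, hw, rfl⟩

/-- The map `gr_n → gradeDR n`. -/
def Bsub (n : ℕ) : ↥(FB k n) →ₗ[k] ↥(gradeDR k n) :=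
  (LinearMap.codRestrict (gradeDR k n) ((coeffk n).comp (mu (k := k)).toLinearMap)
    (fun x => coeff_mu_mem x n)).comp (FB k n).subtype

@[simp] lemma Bsub_apply (n : ℕ) (x : ↥(FB k n)) :
    (Bsub n x : FA k) = coeff n (mu (x : VB k)) := rfl

lemma Bsub_ker (n : ℕ) : FBsub k n ≤ LinearMap.ker (Bsub (k := k) n) := by
  intro x hx
  have hx' : (x : VB k) ∈ FB k (n+1) := hx
  have := mu_FB_mem_Jf hx' n (by omega)
  exact Subtype.ext (by rw [Bsub_apply, this]; rfl)

def Bbar (n : ℕ) : (↥(FB k n) ⧸ FBsub k n) →ₗ[k] ↥(gradeDR k n) :=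
  (FBsub k n).liftQ (Bsub n) (Bsub_ker n)

@[simp] lemma Bbar_mk (n : ℕ) (x : ↥(FB k n)) :
    Bbar (k := k) n (Submodule.Quotient.mk x) = Bsub n x := rfl

def Ahat (n : ℕ) : ↥(gradeDR k n) →ₗ[k] (↥(FB k n) ⧸ FBsub k n) :=
  (FBsub k n).mkQ.comp
    (LinearMap.codRestrict (FB k n) ((alpha (k := k)).toLinearMap.comp (gradeDR k n).subtype)
      (fun w => alpha_grade_mem_FB w.2))

@[simp] lemma Ahat_apply (n : ℕ) (w : ↥(gradeDR k n)) :
    Ahat (k := k) n w = Submodule.Quotient.mk ⟨alpha (w : FA k), alpha_grade_mem_FB w.2⟩ := rfl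

lemma Bbar_Ahat (n : ℕ) : (Bbar (k := k) n).comp (Ahat n) = LinearMap.id := by
  ext w
  show coeff n (mu (alpha (w : FA k))) = (w : FA k)
  exact coeff_mu_alpha_grade w.2

lemma Ahat_Bbar (n : ℕ) : (Ahat (k := k) n).comp (Bbar n) = LinearMap.id := by
  ext x
  show Ahat n (Bsub n x) = Submodule.Quotient.mk x
  have hx := decompS n x.2
  rw [Submodule.mem_sup] at hx
  obtain ⟨a, ha, y, hy, hxy⟩ := hx
  obtain ⟨w, hw, rfl⟩ := ha
  have hBx : (Bsub n x : FA k) = w := by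
    rw [Bsub_apply, ← hxy]
    have hay : alpha.toLinearMap w + y = alpha w + y := rfl
    rw [hay, map_add, map_add, coeff_mu_alpha_grade hw, mu_FB_mem_Jf hy n (by omega), add_zero]
  rw [Ahat_apply, Submodule.Quotient.eq]
  show (FB k n).subtype ((⟨alpha ((Bsub n x : FA k)), alpha_grade_mem_FB (Bsub n x).2⟩ : ↥(FB k n)) - x)
      ∈ FB k (n+1)
  have hval : (FB k n).subtype
      ((⟨alpha ((Bsub n x : FA k)), alpha_grade_mem_FB (Bsub n x).2⟩ : ↥(FB k n)) - x)
      = alpha ((Bsub n x : FA k)) - (x : VB k) := rfl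
  rw [hval, hBx, ← hxy]
  show alpha w - (alpha w + y) ∈ FB k (n+1)
  rw [sub_add_eq_sub_sub, sub_self, zero_sub]
  exact Submodule.neg_mem _ hy

end S6

namespace S6
open PowerSeries
variable {k}

lemma coeff_mu_mul {m n : ℕ} {x y : VB k} (hx : x ∈ FB k m) (hy : y ∈ FB k n) :
    coeff (m + n) (mu (x * y)) =
      coeff m (mu x) * coeff n (mu y) := by
  rw [map_mul, coeff_mul]
  rw [Finset.sum_eq_single (m, n)]
  · rintro ⟨p, q⟩ hpq hne
    rw [Finset.HasAntidiagonal.mem_antidiagonal] at hpq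
    have : p < m ∨ q < n := by
      by_contra hc
      push_neg at hc
      exact hne (by simp only [Prod.mk.injEq]; omega)
    rcases this with h | h
    · rw [mu_FB_mem_Jf hx p h, zero_mul]
    · rw [mu_FB_mem_Jf hy q h, mul_zero]
  · intro h
    exact absurd (Finset.HasAntidiagonal.mem_antidiagonal.2 (rfl : m + n = m + n)) h

end S6

/-- The augmentation-ideal filtration of `V^B = k[F₂]` is an algebra filtration
and the associated graded algebra `gr(V^B) = ⊕ₙ F^n/F^{n+1}` is isomorphic, as
a graded `k`-algebra, to the free associative algebra `V^DR = k⟨e₀,e₁⟩`, via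
the map sending the class of `X_i - 1` in `gr₁` to `e_i`. -/
theorem stmt6 :
    (∀ (m n : ℕ) (x y : VB k), x ∈ FB k m → y ∈ FB k n → x * y ∈ FB k (m + n)) ∧
    (FB k 0 = ⊤) ∧
    (∀ i : Fin 2, XB k i - 1 ∈ FB k 1) ∧
    ∃ φ : ∀ n : ℕ, (↥(FB k n) ⧸ FBsub k n) ≃ₗ[k] ↥(gradeDR k n),
      (∀ (i : Fin 2) (h : XB k i - 1 ∈ FB k 1),
        ((φ 1 (Submodule.Quotient.mk ⟨XB k i - 1, h⟩) : ↥(gradeDR k 1)) :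
            FreeAlgebra k (Fin 2)) = FreeAlgebra.ι k i) ∧
      (∀ (m n : ℕ) (x : ↥(FB k m)) (y : ↥(FB k n))
          (h : (x : VB k) * (y : VB k) ∈ FB k (m + n)),
        ((φ (m + n) (Submodule.Quotient.mk ⟨(x : VB k) * (y : VB k), h⟩) :
            ↥(gradeDR k (m + n))) : FreeAlgebra k (Fin 2)) =
          ((φ m (Submodule.Quotient.mk x) : ↥(gradeDR k m)) : FreeAlgebra k (Fin 2)) *
            ((φ n (Submodule.Quotient.mk y) : ↥(gradeDR k n)) : FreeAlgebra k (Fin 2))) := by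
  refine ⟨fun m n x y hx hy => S6.FB_mul_le m n hx hy, rfl, ?_, ?_⟩
  · intro i
    have e1 : FB k 1 = augIdeal k ^ 1 := rfl
    rw [e1, pow_one]
    exact S6.XB_sub_one_mem i
  · refine ⟨fun n => LinearEquiv.ofLinear (S6.Bbar n) (S6.Ahat n)
      (S6.Bbar_Ahat n) (S6.Ahat_Bbar n), ?_, ?_⟩
    · intro i h
      show (S6.Bsub 1 ⟨XB k i - 1, h⟩ : FreeAlgebra k (Fin 2)) = _
      rw [S6.Bsub_apply]
      show PowerSeries.coeff 1 (S6.mu (XB k i - 1)) = _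
      have : XB k i - 1 = S6.alpha (FreeAlgebra.ι k i) := (S6.alpha_i i).symm
      rw [this, S6.mu_alpha_i, PowerSeries.coeff_monomial, if_pos rfl]
      rfl
    · intro m n x y h
      show (S6.Bsub (m+n) ⟨_, h⟩ : FreeAlgebra k (Fin 2)) =
        (S6.Bsub m x : FreeAlgebra k (Fin 2)) * (S6.Bsub n y : FreeAlgebra k (Fin 2))
      rw [S6.Bsub_apply, S6.Bsub_apply, S6.Bsub_apply]
      exact S6.coeff_mu_mul x.2 y.2
end
end

section
/- For a torsor (G,X) and a subtorsor (G',X'), the group Aut_{G'}(X') of permutations of X' commuting with the G'-action embeds canonically as a subgroup of Aut_G(X); moreover, for two subtorsors (G₁,X₁), (G₂,X₂) with X₁∩X₂ ≠ ∅, one has Aut_{G₁∩G₂}(X₁∩X₂) = Aut_{G₁}(X₁) ∩ Aut_{G₂}(X₂) as subgroups of Aut_G(X). -/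
/-- Subtorsor of the torsor `(G,X)`: a subgroup `G'` and a nonempty `G'`-stable
subset `X'` on which `G'` acts transitively. -/
structure IsSubtorsor {G X : Type*} [Group G] [MulAction G X]
    (G' : Subgroup G) (X' : Set X) : Prop where
  nonempty : X'.Nonempty
  stable : ∀ g ∈ G', ∀ x ∈ X', g • x ∈ X'
  trans : ∀ x ∈ X', ∀ y ∈ X', ∃ g ∈ G', g • x = y

/-- Key lemma: a `G`-equivariant bijection preserves a subtorsor set iff it maps
some (equivalently, a given) point of it into it. -/
lemma subtorsor_key {G X : Type*} [Group G] [MulAction G X]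
    (hfree : ∀ (g : G) (x : X), g • x = x → g = 1)
    {G' : Subgroup G} {X' : Set X} (hsub : IsSubtorsor G' X')
    (f : X ≃ X) (hf : ∀ (g : G) (y : X), f (g • y) = g • f y)
    {x₀ : X} (hx₀ : x₀ ∈ X') :
    f '' X' = X' ↔ f x₀ ∈ X' := by
  constructor
  · intro h
    rw [← h]
    exact Set.mem_image_of_mem f hx₀
  · intro h
    ext y
    constructor
    · rintro ⟨x, hx, rfl⟩
      obtain ⟨g, hg, rfl⟩ := hsub.trans x₀ hx₀ x hx
      rw [hf]
      exact hsub.stable g hg _ h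
    · intro hy
      obtain ⟨g, hg, hgy⟩ := hsub.trans (f x₀) h y hy
      exact ⟨g • x₀, hsub.stable g hg x₀ hx₀, by rw [hf, hgy]⟩

/-- (a) For a subtorsor `(G',X')` of a torsor `(G,X)`, every `G'`-equivariant
permutation of `X'` extends uniquely to a `G`-equivariant permutation of `X`;
this is the canonical embedding `Aut_{G'}(X') ⊆ Aut_G(X)`.
(b) For subtorsors `(G₁,X₁)`, `(G₂,X₂)` with `X₁ ∩ X₂ ≠ ∅`, under this
identification, `Aut_{G₁∩G₂}(X₁∩X₂) = Aut_{G₁}(X₁) ∩ Aut_{G₂}(X₂)`: a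
`G`-equivariant permutation of `X` preserves `X₁ ∩ X₂` iff it preserves both
`X₁` and `X₂`. -/
theorem stmt16 {G X : Type*} [Group G] [MulAction G X]
    (hfree : ∀ (g : G) (x : X), g • x = x → g = 1)
    (htrans : ∀ x y : X, ∃ g : G, g • x = y)
    (hX : Nonempty X) :
    (∀ (G' : Subgroup G) (X' : Set X), IsSubtorsor G' X' →
      ∀ σ : X' ≃ X',
        (∀ g ∈ G', ∀ x : X', ∀ h : g • (x : X) ∈ X', ((σ ⟨g • (x : X), h⟩ : X) = g • (σ x : X))) →
        ∃! f : X ≃ X, (∀ (g : G) (y : X), f (g • y) = g • f y) ∧ ∀ x : X', f x = σ x) ∧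
    (∀ (G₁ G₂ : Subgroup G) (X₁ X₂ : Set X), IsSubtorsor G₁ X₁ → IsSubtorsor G₂ X₂ →
      (X₁ ∩ X₂).Nonempty →
      ∀ f : X ≃ X, (∀ (g : G) (y : X), f (g • y) = g • f y) →
        (f '' (X₁ ∩ X₂) = X₁ ∩ X₂ ↔ f '' X₁ = X₁ ∧ f '' X₂ = X₂)) := by
  constructor
  · intro G' X' hsub σ hσ
    obtain ⟨x₀, hx₀⟩ := hsub.nonempty
    have hcancel : ∀ a b : G, a • x₀ = b • x₀ → a = b := by
      intro a b hab
      have : (b⁻¹ * a) • x₀ = x₀ := by rw [mul_smul, hab, ← mul_smul, inv_mul_cancel, one_smul]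
      exact (inv_mul_eq_one.mp (hfree _ _ this)).symm
    -- the chosen group element carrying x₀ to y
    set c : X → G := fun y => Classical.choose (htrans x₀ y) with hc
    have hcspec : ∀ y : X, c y • x₀ = y := fun y => Classical.choose_spec (htrans x₀ y)
    -- the unique equivariant map sending x₀ to z
    set E : X → X → X := fun z y => c y • z with hE
    have hE_base : ∀ z : X, ∀ g : G, E z (g • x₀) = g • z := by
      intro z g
      have : c (g • x₀) = g := hcancel _ _ (hcspec (g • x₀))
      simp only [hE, this]
    have hE_equiv : ∀ z : X, ∀ (g : G) (y : X), E z (g • y) = g • E z y := by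
      intro z g y
      have h1 : c (g • y) • x₀ = (g * c y) • x₀ := by
        rw [hcspec, mul_smul, hcspec]
      have h2 : c (g • y) = g * c y := hcancel _ _ h1
      simp only [hE, h2, mul_smul]
    set x₀' : X' := ⟨x₀, hx₀⟩ with hx₀'
    set y₀ : X := (σ x₀' : X) with hy₀
    set z₀ : X := (σ.symm x₀' : X) with hz₀
    have hy₀mem : y₀ ∈ X' := (σ x₀').2
    have hz₀mem : z₀ ∈ X' := (σ.symm x₀').2
    -- E y₀ maps z₀ to x₀
    have hFz₀ : E y₀ z₀ = x₀ := by
      obtain ⟨h, hh, hhz⟩ := hsub.trans x₀ hx₀ z₀ hz₀mem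
      have key := hσ h hh x₀' (hsub.stable h hh x₀ hx₀)
      have : (⟨h • x₀, hsub.stable h hh x₀ hx₀⟩ : X') = σ.symm x₀' := by
        apply Subtype.ext; exact hhz
      rw [this, Equiv.apply_symm_apply] at key
      rw [← hhz, hE_base]
      rw [← key]
    -- E z₀ maps y₀ to x₀
    have hFiy₀ : E z₀ y₀ = x₀ := by
      obtain ⟨h, hh, hhy⟩ := hsub.trans x₀ hx₀ y₀ hy₀mem
      obtain ⟨h', hh', hh'z⟩ := hsub.trans z₀ hz₀mem x₀ hx₀
      have hmem : h' • (σ.symm x₀' : X) ∈ X' := by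
        show h' • z₀ ∈ X'
        rw [hh'z]; exact hx₀
      have key := hσ h' hh' (σ.symm x₀') hmem
      have e1 : (⟨h' • (σ.symm x₀' : X), hmem⟩ : X') = x₀' := Subtype.ext hh'z
      rw [e1, Equiv.apply_symm_apply] at key
      -- key : (σ x₀' : X) = h' • (σ (σ.symm x₀') : X)
      have hy : h' • x₀ = y₀ := key.symm
      have : h' = h := hcancel _ _ (by rw [hy, hhy])
      rw [← hhy, hE_base, ← this, hh'z]
    -- the extension
    set F : X ≃ X := ⟨E y₀, E z₀,
      fun y => show E z₀ (E y₀ y) = y by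
        conv_lhs => rw [show E y₀ y = c y • y₀ from rfl]
        rw [hE_equiv, hFiy₀, hcspec],
      fun y => show E y₀ (E z₀ y) = y by
        conv_lhs => rw [show E z₀ y = c y • z₀ from rfl]
        rw [hE_equiv, hFz₀, hcspec]⟩ with hF
    have hFrestrict : ∀ x : X', F x = (σ x : X) := by
      intro x
      obtain ⟨g, hg, hgx⟩ := hsub.trans x₀ hx₀ x x.2
      have key := hσ g hg x₀' (hsub.stable g hg x₀ hx₀)
      have e1 : (⟨g • x₀, hsub.stable g hg x₀ hx₀⟩ : X') = x := by
        apply Subtype.ext; exact hgx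
      rw [e1] at key
      show E y₀ x = _
      rw [← hgx, hE_base, ← key]
    refine ⟨F, ⟨fun g y => hE_equiv y₀ g y, hFrestrict⟩, ?_⟩
    rintro f ⟨hfequiv, hfres⟩
    ext y
    conv_lhs => rw [← hcspec y]
    rw [hfequiv]
    have : f x₀ = y₀ := hfres x₀'
    rw [this]
    show _ = F y
    conv_rhs => rw [← hcspec y]
    show _ = E y₀ (c y • x₀)
    rw [hE_base]
  · intro G₁ G₂ X₁ X₂ h1 h2 hne f hf
    obtain ⟨x₀, hx₀1, hx₀2⟩ := hne
    have hsub12 : IsSubtorsor (G₁ ⊓ G₂) (X₁ ∩ X₂) := by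
      refine ⟨⟨x₀, hx₀1, hx₀2⟩, ?_, ?_⟩
      · rintro g ⟨hg1, hg2⟩ x ⟨hx1, hx2⟩
        exact ⟨h1.stable g hg1 x hx1, h2.stable g hg2 x hx2⟩
      · rintro x ⟨hx1, hx2⟩ y ⟨hy1, hy2⟩
        obtain ⟨g, hg, hgx⟩ := h1.trans x hx1 y hy1
        obtain ⟨g', hg', hg'x⟩ := h2.trans x hx2 y hy2
        have : g' = g := by
          have : (g⁻¹ * g') • x = x := by
            rw [mul_smul, hg'x, ← hgx, ← mul_smul, inv_mul_cancel, one_smul]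
          exact (inv_mul_eq_one.mp (hfree _ _ this)).symm
        exact ⟨g, ⟨hg, this ▸ hg'⟩, hgx⟩
    rw [subtorsor_key hfree hsub12 f hf ⟨hx₀1, hx₀2⟩,
        subtorsor_key hfree h1 f hf hx₀1, subtorsor_key hfree h2 f hf hx₀2]
    exact ⟨fun ⟨a, b⟩ => ⟨a, b⟩, fun ⟨a, b⟩ => ⟨a, b⟩⟩
end
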